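/- arXiv:1105.1310 — 4 statements merged into one kernel-verified Lean document; each statement's English description precedes it below -/
import Mathlib

section
/- Let X and ε be independent real random variables, where ε has a density f_ε with respect to Lebesgue measure whose Fourier transform f_ε* never vanishes, and set Z = X + ε. Let φ be a continuous integrable function on ℝ such that the function t ↦ φ*(t)/f_ε*(t) is integrable. Then E[φ(X)] = (1/2π) E[ ∫ φ*(t) e^{−itZ} / f_ε*(−t) dt ], and in particular E[φ(X)] equals the real part of this quantity. -/
/-!
The characteristic function of `Z = X + ε` factors as `E e^{-itX} · f_ε*(-t)`. Hence dividing by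
`f_ε*(-t)` and integrating against `φ*(t)` gives, after two applications of Fubini (legitimate
since `φ*/f_ε*` is integrable and `|e^{-itZ}| = 1`), `E ∫ φ*(t) e^{-itX} dt`, and by Fourier
inversion the inner integral is `2π φ(X)`.
-/

open MeasureTheory ProbabilityTheory Set
open scoped ProbabilityTheory FourierTransform Real

/-- Fourier transform of an integrable real function: `g*(t) = ∫ e^{itx} g(x) dx`. -/
noncomputable def ftR (g : ℝ → ℝ) (t : ℝ) : ℂ :=
  ∫ x : ℝ, Complex.exp (Complex.I * (t : ℂ) * (x : ℂ)) * (g x : ℂ)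

lemma ftR_eq_fourier (g : ℝ → ℝ) (t : ℝ) :
    ftR g t = 𝓕 (fun x => (g x : ℂ)) (t / (-2 * π)) := by
  rw [Real.fourier_real_eq_integral_exp_smul]
  refine integral_congr_ae (ae_of_all _ fun x => ?_)
  dsimp only
  rw [smul_eq_mul]
  congr 2
  push_cast
  field_simp

/-- `ftR g 0` is the integral of `g`, which is `0` by convention when `g` is not integrable. -/
lemma integrable_of_ftR_zero_ne_zero {g : ℝ → ℝ} (h : ftR g 0 ≠ 0) : Integrable g := by
  refine (Integrable.of_integral_ne_zero (f := fun x => (g x : ℂ)) ?_).re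
  simpa [ftR] using h

lemma charFun_withDensity_ofReal {f : ℝ → ℝ} (hf0 : ∀ x, 0 ≤ f x) (hf : AEMeasurable f)
    (t : ℝ) : charFun (volume.withDensity fun x => ENNReal.ofReal (f x)) t = ftR f t := by
  rw [charFun_apply_real, ftR]
  simp_rw [ENNReal.ofReal]
  rw [integral_withDensity_eq_integral_smul₀ hf.real_toNNReal]
  refine integral_congr_ae (ae_of_all _ fun x => ?_)
  dsimp only
  rw [NNReal.smul_def, Real.coe_toNNReal _ (hf0 x), Complex.real_smul, mul_comm]
  congr 2
  ring

lemma integral_exp_neg_mul_eq_charFun_map {Ω : Type*} [MeasurableSpace Ω] {P : Measure Ω}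
    {Y : Ω → ℝ} (hY : AEMeasurable Y P) (t : ℝ) :
    ∫ ω, Complex.exp (-(Complex.I * t * Y ω)) ∂P = charFun (P.map Y) (-t) := by
  rw [charFun_apply_real, integral_map hY (by fun_prop)]
  congr! 3
  push_cast
  ring

lemma integral_integral_mul_exp_neg_eq_integral_mul_charFun {Ω : Type*} [MeasurableSpace Ω]
    {P : Measure Ω} [IsFiniteMeasure P] {Y : Ω → ℝ} (hY : Measurable Y) {K : ℝ → ℂ}
    (hK : Integrable K) :
    ∫ ω, (∫ t : ℝ, K t * Complex.exp (-(Complex.I * t * Y ω))) ∂P =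
      ∫ t : ℝ, K t * charFun (P.map Y) (-t) := by
  have hprod : Integrable (fun p : Ω × ℝ => K p.2 * Complex.exp (-(Complex.I * p.2 * Y p.1)))
      (P.prod volume) := by
    refine (hK.norm.comp_snd P).mono' ?_ (ae_of_all _ fun p => ?_)
    · exact (hK.aestronglyMeasurable.comp_snd).mul (by fun_prop)
    · simp [Complex.norm_exp]
  rw [integral_integral_swap hprod]
  simp_rw [integral_const_mul, integral_exp_neg_mul_eq_charFun_map hY.aemeasurable]

lemma MeasureTheory.Integrable.of_div_charFun {μ : Measure ℝ} [IsProbabilityMeasure μ]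
    {g : ℝ → ℂ} (hg : Integrable fun t => g t / charFun μ t) (hμ : ∀ t, charFun μ t ≠ 0) :
    Integrable g := by
  refine (hg.bdd_mul (continuous_charFun (μ := μ)).aestronglyMeasurable
    (ae_of_all _ norm_charFun_le_one)).congr (ae_of_all _ fun t => ?_)
  exact mul_div_cancel₀ _ (hμ t)

/-- `charFun μ (-t)` is the conjugate of `charFun μ t`, so both quotients have the same norm. -/
lemma MeasureTheory.Integrable.div_charFun_neg {μ : Measure ℝ} [IsProbabilityMeasure μ]
    {g : ℝ → ℂ} (hg : Integrable fun t => g t / charFun μ t) (hμ : ∀ t, charFun μ t ≠ 0) :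
    Integrable fun t => g t / charFun μ (-t) := by
  have hphase : Continuous fun t => charFun μ t / charFun μ (-t) :=
    continuous_charFun.div (continuous_charFun.comp continuous_neg) fun t => hμ (-t)
  refine hg.norm.mono' ?_ (ae_of_all _ fun t => ?_)
  · refine (hg.aestronglyMeasurable.mul hphase.aestronglyMeasurable).congr
      (ae_of_all _ fun t => ?_)
    exact div_mul_div_cancel₀ (hμ t)
  · simp [charFun_neg]

lemma integral_ftR_mul_exp_neg {φ : ℝ → ℝ} (hc : Continuous φ) (hint : Integrable φ)
    (hft : Integrable (ftR φ)) (x : ℝ) :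
    ∫ t : ℝ, ftR φ t * Complex.exp (-(Complex.I * t * x)) = ((2 * π * φ x : ℝ) : ℂ) := by
  have hfourier : Integrable (𝓕 fun y => (φ y : ℂ)) := by
    have : (𝓕 fun y => (φ y : ℂ)) = fun w => ftR φ (-2 * π * w) := by
      ext w; rw [ftR_eq_fourier]; field_simp
    exact this ▸ hft.comp_mul_left' (by positivity)
  calc ∫ t : ℝ, ftR φ t * Complex.exp (-(Complex.I * t * x))
      = ∫ t : ℝ, Complex.exp (↑(-2 * π * (t / (-2 * π)) * -x) * Complex.I) •
          𝓕 (fun y => (φ y : ℂ)) (t / (-2 * π)) := by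
        refine integral_congr_ae (ae_of_all _ fun t => ?_)
        dsimp only
        rw [ftR_eq_fourier, smul_eq_mul, mul_comm]
        congr 2
        push_cast
        field_simp
    _ = (2 * π : ℝ) • 𝓕⁻ (𝓕 fun y => (φ y : ℂ)) x := by
        rw [Measure.integral_comp_div (fun w => Complex.exp (↑(-2 * π * w * -x) * Complex.I) •
          𝓕 (fun y => (φ y : ℂ)) w), Real.fourierInv_eq_fourier_neg,
          Real.fourier_real_eq_integral_exp_smul, abs_of_neg (by linarith [Real.pi_pos])]
        ring_nf
    _ = ((2 * π * φ x : ℝ) : ℂ) := by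
        have hφc : Continuous fun y => (φ y : ℂ) := by fun_prop
        rw [hφc.fourierInv_fourier_eq hint.ofReal hfourier]
        simp [Complex.real_smul]

lemma ProbabilityTheory.IndepFun.integral_deconvolution_eq {Ω : Type*} [MeasurableSpace Ω]
    {P : Measure Ω} [IsProbabilityMeasure P] {X ε : Ω → ℝ} (hXm : Measurable X)
    (hεm : Measurable ε) (hindep : IndepFun X ε P) (hε : ∀ t, charFun (P.map ε) t ≠ 0)
    {φ : ℝ → ℝ} (hφc : Continuous φ) (hφint : Integrable φ)
    (hratio : Integrable fun t => ftR φ t / charFun (P.map ε) t) :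
    ∫ ω, (∫ t : ℝ, ftR φ t * Complex.exp (-(Complex.I * t * ↑(X ω + ε ω))) /
      charFun (P.map ε) (-t)) ∂P = ((2 * π * ∫ ω, φ (X ω) ∂P : ℝ) : ℂ) := by
  have : IsProbabilityMeasure (P.map ε) := Measure.isProbabilityMeasure_map hεm.aemeasurable
  have hft : Integrable (ftR φ) := hratio.of_div_charFun hε
  calc _ = ∫ ω, (∫ t : ℝ, ftR φ t / charFun (P.map ε) (-t) *
        Complex.exp (-(Complex.I * t * ↑(X ω + ε ω)))) ∂P := by
        simp_rw [mul_div_right_comm]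
    _ = ∫ t : ℝ, ftR φ t / charFun (P.map ε) (-t) *
          charFun (P.map fun ω => X ω + ε ω) (-t) :=
        integral_integral_mul_exp_neg_eq_integral_mul_charFun (hXm.add hεm)
          (hratio.div_charFun_neg hε)
    _ = ∫ t : ℝ, ftR φ t * charFun (P.map X) (-t) := by
        rw [hindep.charFun_map_fun_add_eq_mul hXm.aemeasurable hεm.aemeasurable]
        congr 1 with t
        rw [Pi.mul_apply, div_mul_comm, mul_div_cancel_right₀ _ (hε (-t)), mul_comm]
    _ = ∫ ω, (∫ t : ℝ, ftR φ t * Complex.exp (-(Complex.I * t * X ω))) ∂P :=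
        (integral_integral_mul_exp_neg_eq_integral_mul_charFun hXm hft).symm
    _ = ∫ ω, ((2 * π * φ (X ω) : ℝ) : ℂ) ∂P := by
        simp_rw [integral_ftR_mul_exp_neg hφc hφint hft]
    _ = ((2 * π * ∫ ω, φ (X ω) ∂P : ℝ) : ℂ) := by
        rw [integral_complex_ofReal, integral_const_mul]

theorem stmt0_general {Ω : Type*} [MeasureSpace Ω] [IsProbabilityMeasure (ℙ : Measure Ω)]
    (X ε : Ω → ℝ) (hXm : Measurable X) (hεm : Measurable ε)
    (hindep : IndepFun X ε ℙ)
    (fε : ℝ → ℝ) (hfε0 : ∀ x, 0 ≤ fε x)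
    (hεlaw : Measure.map ε ℙ = volume.withDensity (fun x => ENNReal.ofReal (fε x)))
    (hfεnz : ∀ t : ℝ, ftR fε t ≠ 0)
    (Z : Ω → ℝ) (hZ : ∀ ω, Z ω = X ω + ε ω)
    (φ : ℝ → ℝ) (hφc : Continuous φ) (hφint : Integrable φ volume)
    (hratio : Integrable (fun t => ftR φ t / ftR fε t) volume) :
    ((∫ ω, φ (X ω)) : ℂ) =
      (1 / (2 * Real.pi) : ℝ) *
        ∫ ω, ∫ t : ℝ, ftR φ t * Complex.exp (-(Complex.I * (t : ℂ) * (Z ω : ℂ))) /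
          ftR fε (-t) ∧
    (∫ ω, φ (X ω)) =
      (1 / (2 * Real.pi)) *
        (∫ ω, ∫ t : ℝ, ftR φ t * Complex.exp (-(Complex.I * (t : ℂ) * (Z ω : ℂ))) /
          ftR fε (-t)).re := by
  simp_rw [hZ]
  have hfε : ftR fε = charFun (Measure.map ε ℙ) := by
    ext t
    rw [hεlaw, charFun_withDensity_ofReal hfε0
      (integrable_of_ftR_zero_ne_zero (hfεnz 0)).aemeasurable]
  rw [hfε] at hratio hfεnz ⊢
  rw [hindep.integral_deconvolution_eq hXm hεm hfεnz hφc hφint hratio, Complex.ofReal_re,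
    integral_complex_ofReal]
  constructor
  · push_cast
    field_simp
  · field_simp

/-- Let `X` and `ε` be independent, `ε` with known density `f_ε` whose Fourier
transform never vanishes, and `Z = X + ε`. For a continuous integrable `φ` with `φ*/f_ε*`
integrable, `E[φ(X)] = (1/2π) E[∫ φ*(t) e^{−itZ} / f_ε*(−t) dt]`, and in particular `E[φ(X)]`
is the real part of this quantity. -/
theorem stmt0 {Ω : Type*} [MeasureSpace Ω] [IsProbabilityMeasure (ℙ : Measure Ω)]
    (X ε : Ω → ℝ) (hXm : Measurable X) (hεm : Measurable ε)
    (hindep : IndepFun X ε ℙ)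
    (fε : ℝ → ℝ) (hfε0 : ∀ x, 0 ≤ fε x)
    (hεlaw : Measure.map ε ℙ = volume.withDensity (fun x => ENNReal.ofReal (fε x)))
    (hfεnz : ∀ t : ℝ, ftR fε t ≠ 0)
    (Z : Ω → ℝ) (hZ : ∀ ω, Z ω = X ω + ε ω)
    (φ : ℝ → ℝ) (hφc : Continuous φ) (hφint : Integrable φ volume)
    (hratio : Integrable (fun t => ftR φ t / ftR fε t) volume)
    (hφX : Integrable (fun ω => φ (X ω)) ℙ) :
    ((∫ ω, φ (X ω)) : ℂ) =
      (1 / (2 * Real.pi) : ℝ) *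
        ∫ ω, ∫ t : ℝ, ftR φ t * Complex.exp (-(Complex.I * (t : ℂ) * (Z ω : ℂ))) /
          ftR fε (-t) ∧
    (∫ ω, φ (X ω)) =
      (1 / (2 * Real.pi)) *
        (∫ ω, ∫ t : ℝ, ftR φ t * Complex.exp (-(Complex.I * (t : ℂ) * (Z ω : ℂ))) /
          ftR fε (-t)).re :=
  stmt0_general X ε hXm hεm hindep fε hfε0 hεlaw hfεnz Z hZ φ hφc hφint hratio
end

section
/- Let X be a real random variable with E|X|^p < ∞ for some p > 2, and let Q be the inverse cadlag of the tail function t ↦ P(|X| > t), i.e. Q(u) = inf{t ≥ 0 : P(|X| > t) ≤ u}. Let (a_k)_{k≥1} be a sequence with 0 ≤ a_k ≤ 1 for all k. If Σ_{k≥1} k^{2/(p−2)} a_k < ∞, then Σ_{k≥1} ∫₀^{a_k} Q²(u) du < ∞. -/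
/-
Writing `N(u)` for the number of `k` with `u ∈ (0, a_k]`, the series equals
`∫₀^∞ N(u) Q²(u) du`, and Hölder's inequality with exponents `p/(p-2)` and `p/2` bounds it by
`‖N‖_{p/(p-2)} ‖Q‖_p²`. The layer-cake formula gives `∫₀^∞ Q^p ≤ E|X|^p`, since
`u < P(|X| > t)` whenever `t < Q(u)`. As `N(u)` counts distinct indices,
`N(u)^{r+1} ≤ 2^{r+1} Σ_{k : u ≤ a_k} k^r` for `r = 2/(p-2)`, and integrating in `u` bounds
`∫ N^{p/(p-2)}` by `2^{r+1} Σ_k k^r a_k`.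
-/

open MeasureTheory ProbabilityTheory Filter Set
open scoped ProbabilityTheory

/-- The inverse cadlag of the tail function `t ↦ P(|X| > t)`:
`Q(u) = inf {t ≥ 0 : P(|X| > t) ≤ u}`. -/
noncomputable def tailQuantile {Ω : Type*} [MeasureSpace Ω] (X : Ω → ℝ) (u : ℝ) : ℝ :=
  sInf {t : ℝ | 0 ≤ t ∧ (ℙ {ω | t < |X ω|}).toReal ≤ u}

open scoped Topology ENNReal

section TailQuantile

variable {Ω : Type*} [MeasureSpace Ω] {X : Ω → ℝ}

lemma tailQuantile_nonneg (X : Ω → ℝ) (u : ℝ) : 0 ≤ tailQuantile X u :=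
  Real.sInf_nonneg fun _ ht => ht.1

lemma lt_measure_of_lt_tailQuantile {t u : ℝ} (ht : 0 ≤ t) (h : t < tailQuantile X u) :
    u < (ℙ {ω | t < |X ω|}).toReal := by
  by_contra! hle
  exact h.not_ge (csInf_le ⟨0, fun _ hs => hs.1⟩ ⟨ht, hle⟩)

lemma tendsto_measure_lt_abs_atTop [IsFiniteMeasure (ℙ : Measure Ω)] (hX : Measurable X) :
    Tendsto (fun t : ℝ => ℙ {ω | t < |X ω|}) atTop (𝓝 0) := by
  have hlim := tendsto_measure_iInter_atTop (μ := ℙ) (s := fun t : ℝ => {ω | t < |X ω|})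
    (fun _ => (measurableSet_lt measurable_const hX.abs).nullMeasurableSet)
    (fun _ _ hst _ hω => hst.trans_lt hω) ⟨0, measure_ne_top _ _⟩
  have hempty : ⋂ t : ℝ, {ω | t < |X ω|} = ∅ :=
    eq_empty_of_forall_notMem fun ω hω => lt_irrefl (|X ω|) (mem_iInter.1 hω |X ω|)
  rwa [hempty, measure_empty] at hlim

lemma tailQuantile_antitoneOn [IsFiniteMeasure (ℙ : Measure Ω)] (hX : Measurable X) :
    AntitoneOn (tailQuantile X) (Ioi 0) := by
  intro u hu v _ huv
  obtain ⟨t, ht, ht0⟩ := (((tendsto_measure_lt_abs_atTop hX).eventually_lt_const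
    (ENNReal.ofReal_pos.2 hu)).and (eventually_ge_atTop 0)).exists
  exact csInf_le_csInf ⟨0, fun _ hs => hs.1⟩
    ⟨t, ht0, ENNReal.toReal_le_of_le_ofReal (le_of_lt hu) ht.le⟩
    fun t ht => ⟨ht.1, ht.2.trans huv⟩

lemma aemeasurable_tailQuantile [IsFiniteMeasure (ℙ : Measure Ω)] (hX : Measurable X) :
    AEMeasurable (tailQuantile X) (volume.restrict (Ioi 0)) :=
  aemeasurable_restrict_of_antitoneOn measurableSet_Ioi (tailQuantile_antitoneOn hX)

lemma volume_setOf_lt_tailQuantile_le {t : ℝ} (ht : 0 ≤ t) :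
    volume.restrict (Ioi 0) {u | t < tailQuantile X u} ≤ ℙ {ω | t < |X ω|} :=
  calc volume.restrict (Ioi 0) {u | t < tailQuantile X u}
      ≤ volume (Ioc 0 (ℙ {ω | t < |X ω|}).toReal) := by
        rw [Measure.restrict_apply' measurableSet_Ioi]
        exact measure_mono fun u hu => ⟨hu.2, (lt_measure_of_lt_tailQuantile ht hu.1).le⟩
    _ ≤ ℙ {ω | t < |X ω|} := by
        rw [Real.volume_Ioc, sub_zero]
        exact ENNReal.ofReal_toReal_le

lemma lintegral_tailQuantile_rpow_le [IsFiniteMeasure (ℙ : Measure Ω)] (hX : Measurable X)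
    {p : ℝ} (hp : 0 < p) :
    ∫⁻ u in Ioi 0, ENNReal.ofReal (tailQuantile X u ^ p) ≤
      ∫⁻ ω, ENNReal.ofReal (|X ω| ^ p) := by
  rw [lintegral_rpow_eq_lintegral_meas_lt_mul _ (ae_of_all _ (tailQuantile_nonneg X))
      (aemeasurable_tailQuantile hX) hp,
    lintegral_rpow_eq_lintegral_meas_lt_mul _ (ae_of_all _ fun ω => abs_nonneg (X ω))
      hX.abs.aemeasurable hp]
  gcongr ENNReal.ofReal p * ?_
  exact setLIntegral_mono' measurableSet_Ioi fun t ht =>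
    mul_le_mul_left (volume_setOf_lt_tailQuantile_le (le_of_lt ht)) _

end TailQuantile

section Counting

lemma sum_range_card_le_sum_of_monotone {f : ℕ → ℝ} (hf : Monotone f) (S : Finset ℕ) :
    ∑ j ∈ Finset.range S.card, f j ≤ ∑ k ∈ S, f k := by
  induction S using Finset.induction_on_max with
  | empty => simp
  | insert m S hlt ih =>
    have hm : m ∉ S := fun h => lt_irrefl m (hlt m h)
    have hcard : S.card ≤ m := by
      simpa using Finset.card_le_card fun k hk => Finset.mem_range.2 (hlt k hk)
    rw [Finset.card_insert_of_notMem hm, Finset.sum_insert hm, Finset.sum_range_succ]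
    linarith [hf hcard]

lemma half_rpow_le_sum_range {r : ℝ} (hr : 0 ≤ r) (n : ℕ) :
    ((n : ℝ) / 2) ^ (r + 1) ≤ ∑ j ∈ Finset.range n, ((j : ℝ) + 1) ^ r := by
  -- Pair `j` with `n - 1 - j`: one of `j + 1` and `n - j` is at least `n / 2`.
  have hpair : ∀ j ∈ Finset.range n,
      ((n : ℝ) / 2) ^ r ≤ ((j : ℝ) + 1) ^ r + (((n - 1 - j : ℕ) : ℝ) + 1) ^ r := by
    intro j hj
    have hj : j < n := Finset.mem_range.1 hj
    have hcast : ((n - 1 - j : ℕ) : ℝ) + 1 = n - j := by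
      rw [Nat.cast_sub (by omega), Nat.cast_sub (by omega)]
      ring
    have hnj : (j : ℝ) + 1 ≤ n := by exact_mod_cast hj
    rw [hcast]
    rcases le_total ((n : ℝ) / 2) (j + 1) with h | h
    · exact le_add_of_le_of_nonneg (Real.rpow_le_rpow (by positivity) h hr)
        (Real.rpow_nonneg (by linarith) r)
    · exact le_add_of_nonneg_of_le (by positivity)
        (Real.rpow_le_rpow (by positivity) (by linarith) hr)
  have hsum := Finset.sum_le_sum hpair
  rw [Finset.sum_add_distrib, Finset.sum_range_reflect (fun j => ((j : ℝ) + 1) ^ r) n,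
    Finset.sum_const, Finset.card_range, nsmul_eq_mul] at hsum
  rw [Real.rpow_add_one' (by positivity) (by linarith)]
  linarith

lemma card_rpow_le_sum {r : ℝ} (hr : 0 ≤ r) (S : Finset ℕ) :
    (S.card : ℝ) ^ (r + 1) ≤ 2 ^ (r + 1) * ∑ k ∈ S, ((k : ℝ) + 1) ^ r := by
  have hmono : Monotone fun j : ℕ => ((j : ℝ) + 1) ^ r := fun i j hij =>
    Real.rpow_le_rpow (by positivity) (by gcongr) hr
  calc (S.card : ℝ) ^ (r + 1) = 2 ^ (r + 1) * ((S.card : ℝ) / 2) ^ (r + 1) := by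
        rw [← Real.mul_rpow (by norm_num) (by positivity), mul_div_cancel₀ _ two_ne_zero]
    _ ≤ 2 ^ (r + 1) * ∑ k ∈ S, ((k : ℝ) + 1) ^ r := by
        gcongr
        exact (half_rpow_le_sum_range hr _).trans (sum_range_card_le_sum_of_monotone hmono S)

variable {α : Type*}

lemma tsum_indicator_one_rpow_le (s : ℕ → Set α) {x : α} (hx : {k | x ∈ s k}.Finite)
    {r : ℝ} (hr : 0 ≤ r) :
    (∑' k, (s k).indicator 1 x) ^ (r + 1) ≤
      ENNReal.ofReal (2 ^ (r + 1)) *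
        ∑' k : ℕ, ENNReal.ofReal (((k : ℝ) + 1) ^ r) * (s k).indicator 1 x := by
  set T := hx.toFinset
  have hT : ∀ c : ℕ → ℝ≥0∞, ∑' k, c k * (s k).indicator 1 x = ∑ k ∈ T, c k := by
    intro c
    rw [tsum_eq_sum (s := T) fun k hk => by
      simp [indicator_of_notMem (show x ∉ s k from mt hx.mem_toFinset.2 hk)]]
    exact Finset.sum_congr rfl fun k hk => by
      simp [indicator_of_mem (show x ∈ s k from hx.mem_toFinset.1 hk)]
  have hcount : ∑' k, (s k).indicator (1 : α → ℝ≥0∞) x = T.card := by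
    simpa using hT 1
  rw [hcount, hT, ← ENNReal.ofReal_natCast, ENNReal.ofReal_rpow_of_nonneg (by positivity)
    (by positivity), ← ENNReal.ofReal_sum_of_nonneg fun _ _ => by positivity,
    ← ENNReal.ofReal_mul (by positivity)]
  exact ENNReal.ofReal_le_ofReal (card_rpow_le_sum hr T)

variable [MeasurableSpace α] {μ : Measure α} {s : ℕ → Set α}

lemma lintegral_tsum_indicator_one_rpow_le (hs : ∀ k, MeasurableSet (s k))
    (hfin : ∀ᵐ x ∂μ, {k | x ∈ s k}.Finite) {r : ℝ} (hr : 0 ≤ r) :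
    ∫⁻ x, (∑' k, (s k).indicator 1 x) ^ (r + 1) ∂μ ≤
      ENNReal.ofReal (2 ^ (r + 1)) * ∑' k : ℕ, ENNReal.ofReal (((k : ℝ) + 1) ^ r) * μ (s k) :=
  calc ∫⁻ x, (∑' k, (s k).indicator 1 x) ^ (r + 1) ∂μ
      ≤ ∫⁻ x, ENNReal.ofReal (2 ^ (r + 1)) *
          ∑' k : ℕ, ENNReal.ofReal (((k : ℝ) + 1) ^ r) * (s k).indicator 1 x ∂μ :=
        lintegral_mono_ae (hfin.mono fun _ hx => tsum_indicator_one_rpow_le s hx hr)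
    _ = _ := by
        rw [lintegral_const_mul' _ _ ENNReal.ofReal_ne_top,
          lintegral_tsum fun k => ((measurable_one.indicator (hs k)).const_mul _).aemeasurable]
        simp_rw [lintegral_const_mul' _ _ ENNReal.ofReal_ne_top,
          lintegral_indicator_one (hs _)]

lemma tsum_setLIntegral_eq_lintegral_tsum_indicator_one_mul (hs : ∀ k, MeasurableSet (s k))
    {f : α → ℝ≥0∞} (hf : AEMeasurable f μ) :
    ∑' k, ∫⁻ x in s k, f x ∂μ = ∫⁻ x, (∑' k, (s k).indicator 1 x) * f x ∂μ := by
  simp_rw [← ENNReal.tsum_mul_right]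
  rw [lintegral_tsum (f := fun k x => (s k).indicator 1 x * f x)
    fun k => (measurable_one.indicator (hs k)).aemeasurable.mul hf]
  refine tsum_congr fun k => ?_
  rw [← lintegral_indicator (hs k)]
  exact lintegral_congr fun x => by simp [← indicator_mul_left]

end Counting

lemma finite_setOf_le_of_summable_mul {w b : ℕ → ℝ} (hw : ∀ k, 1 ≤ w k)
    (hsum : Summable fun k => w k * b k) {u : ℝ} (hu : 0 < u) : {k | u ≤ b k}.Finite :=
  (eventually_cofinite.1 (hsum.tendsto_cofinite_zero.eventually_lt_const hu)).subset
    fun k hk => not_lt.2 (hk.trans (le_mul_of_one_le_left (hu.le.trans hk) (hw k)))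

lemma lintegral_tsum_indicator_Ioc_rpow_ne_top {r : ℝ} (hr : 0 ≤ r) {b : ℕ → ℝ}
    (hsum : Summable fun k : ℕ => ((k + 1 : ℕ) : ℝ) ^ r * b k) :
    ∫⁻ u in Ioi 0, (∑' k, (Ioc 0 (b k)).indicator 1 u) ^ (r + 1) ≠ ⊤ := by
  have hweight : ∀ k : ℕ,
      ENNReal.ofReal (((k : ℝ) + 1) ^ r) * volume.restrict (Ioi 0) (Ioc 0 (b k)) =
        ENNReal.ofReal (((k + 1 : ℕ) : ℝ) ^ r * b k) := fun k => by
    rw [Measure.restrict_apply measurableSet_Ioc, inter_eq_left.2 Ioc_subset_Ioi_self,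
      Real.volume_Ioc, sub_zero, ← ENNReal.ofReal_mul (by positivity), Nat.cast_succ]
  have hfin : ∀ᵐ u ∂volume.restrict (Ioi 0), {k | u ∈ Ioc 0 (b k)}.Finite :=
    (ae_restrict_iff' measurableSet_Ioi).2 <| ae_of_all _ fun u hu =>
      (finite_setOf_le_of_summable_mul (fun k => Real.one_le_rpow (by simp) hr) hsum hu).subset
        fun k hk => hk.2
  refine ne_top_of_le_ne_top (ENNReal.mul_ne_top ENNReal.ofReal_ne_top ?_)
    (lintegral_tsum_indicator_one_rpow_le (fun _ => measurableSet_Ioc) hfin hr)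
  simpa only [hweight] using hsum.tsum_ofReal_ne_top

lemma holderConjugate_two_div_sub_two_add_one {p : ℝ} (hp : 2 < p) :
    (2 / (p - 2) + 1).HolderConjugate (p / 2) := by
  have hp2 : 0 < p - 2 := by linarith
  rw [Real.holderConjugate_iff]
  refine ⟨by linarith [div_pos two_pos hp2], ?_⟩
  field_simp
  ring

lemma ofReal_sq_rpow_half {x : ℝ} (hx : 0 ≤ x) {p : ℝ} (hp : 0 ≤ p) :
    ENNReal.ofReal (x ^ 2) ^ (p / 2) = ENNReal.ofReal (x ^ p) := by
  rw [ENNReal.ofReal_rpow_of_nonneg (sq_nonneg _) (by positivity), ← Real.rpow_natCast,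
    ← Real.rpow_mul hx, Nat.cast_ofNat, mul_div_cancel₀ p two_ne_zero]

theorem stmt6_general {Ω : Type*} [MeasureSpace Ω] [IsProbabilityMeasure (ℙ : Measure Ω)]
    (X : Ω → ℝ) (hXm : Measurable X) (p : ℝ) (hp : 2 < p)
    (hmom : Integrable (fun ω => |X ω| ^ p) ℙ)
    (a : ℕ → ℝ)
    (hsum : Summable (fun k : ℕ => ((k + 1 : ℕ) : ℝ) ^ (2 / (p - 2)) * a (k + 1))) :
    (∑' k : ℕ, ∫⁻ u in Ioc (0 : ℝ) (a (k + 1)),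
        ENNReal.ofReal ((tailQuantile X u) ^ 2)) ≠ ⊤ := by
  set μ := volume.restrict (Ioi (0 : ℝ))
  set s : ℕ → Set ℝ := fun k => Ioc 0 (a (k + 1))
  have hs : ∀ k, MeasurableSet (s k) := fun _ => measurableSet_Ioc
  have hQ : AEMeasurable (fun u => ENNReal.ofReal (tailQuantile X u ^ 2)) μ :=
    ((aemeasurable_tailQuantile hXm).pow_const 2).ennreal_ofReal
  have hμs : ∀ k, volume.restrict (s k) = μ.restrict (s k) := fun _ =>
    (Measure.restrict_restrict_of_subset Ioc_subset_Ioi_self).symm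
  rw [tsum_congr fun k => congrArg (lintegral · _) (hμs k),
    tsum_setLIntegral_eq_lintegral_tsum_indicator_one_mul hs hQ]
  refine ne_top_of_le_ne_top ?_ (ENNReal.lintegral_mul_le_Lp_mul_Lq μ
    (holderConjugate_two_div_sub_two_add_one hp)
    (Measurable.tsum fun k => measurable_one.indicator (hs k)).aemeasurable hQ)
  refine ENNReal.mul_ne_top (ENNReal.rpow_ne_top_of_nonneg (by positivity)
    (lintegral_tsum_indicator_Ioc_rpow_ne_top (div_pos two_pos (sub_pos.2 hp)).le hsum))
    (ENNReal.rpow_ne_top_of_nonneg (by positivity) ?_)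
  simp_rw [ofReal_sq_rpow_half (tailQuantile_nonneg X _) (by linarith : (0 : ℝ) ≤ p)]
  exact ne_top_of_le_ne_top hmom.lintegral_lt_top.ne
    (lintegral_tailQuantile_rpow_le hXm (by linarith))

/-- If `E|X|^p < ∞` for some `p > 2`, `(a_k)_{k ≥ 1}` takes values in `[0,1]`
and `Σ_{k≥1} k^{2/(p−2)} a_k < ∞`, then `Σ_{k≥1} ∫₀^{a_k} Q²(u) du < ∞`, where `Q` is the
inverse cadlag of the tail function of `|X|`. -/
theorem stmt6 {Ω : Type*} [MeasureSpace Ω] [IsProbabilityMeasure (ℙ : Measure Ω)]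
    (X : Ω → ℝ) (hXm : Measurable X) (p : ℝ) (hp : 2 < p)
    (hmom : Integrable (fun ω => |X ω| ^ p) ℙ)
    (a : ℕ → ℝ) (ha0 : ∀ k, 0 ≤ a k) (ha1 : ∀ k, a k ≤ 1)
    (hsum : Summable (fun k : ℕ => ((k + 1 : ℕ) : ℝ) ^ (2 / (p - 2)) * a (k + 1))) :
    (∑' k : ℕ, ∫⁻ u in Ioc (0 : ℝ) (a (k + 1)),
        ENNReal.ofReal ((tailQuantile X u) ^ 2)) ≠ ⊤ :=
  stmt6_general X hXm p hp hmom a hsum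
end

section
/- Let X be a real random variable with E|X|^p < ∞ for some p > 2. Define G(t) = t^{−1} E(X² 1_{X² > t}) for t > 0, and let G^{−1} be its inverse cadlag, G^{−1}(v) = inf{t > 0 : G(t) ≤ v}. Let (t_k)_{k≥1} be a sequence of positive reals. If Σ_{k≥1} t_k^{(p−2)/p} < ∞, then Σ_{k≥1} G^{−1}(t_k) · t_k < ∞. -/
open MeasureTheory ProbabilityTheory Filter Set
open scoped ProbabilityTheory

/-- `G(t) = t⁻¹ E(X² 1_{X² > t})` for `t > 0`. -/
noncomputable def Gfun {Ω : Type*} [MeasureSpace Ω] (X : Ω → ℝ) (t : ℝ) : ℝ :=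
  t⁻¹ * ∫ ω, (X ω) ^ 2 * (if t < (X ω) ^ 2 then 1 else 0)

/-- The inverse cadlag of `G`: `G⁻¹(v) = inf {t > 0 : G(t) ≤ v}`. -/
noncomputable def GfunInv {Ω : Type*} [MeasureSpace Ω] (X : Ω → ℝ) (v : ℝ) : ℝ :=
  sInf {t : ℝ | 0 < t ∧ Gfun X t ≤ v}

/- By Markov's inequality in the form `x² 1_{x² > s} ≤ |x|^p s^{1 - p/2}`, one has
`G(s) ≤ E|X|^p s^{-p/2}`, so `G(s) ≤ v` as soon as `s = (C/v)^{2/p}` with `C > E|X|^p`. Hence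
`G⁻¹(v) ≤ (C/v)^{2/p}`, and `G⁻¹(t_k) t_k ≤ C^{2/p} t_k^{(p-2)/p}` is summable. -/

lemma sq_mul_ite_le_abs_rpow_mul_rpow {p s : ℝ} (hp : 2 ≤ p) (hs : 0 < s) (x : ℝ) :
    x ^ 2 * (if s < x ^ 2 then 1 else 0) ≤ |x| ^ p * s ^ ((2 - p) / 2) := by
  split_ifs with h
  · have hx : 0 < |x| := abs_pos.mpr fun h0 => by simp [h0] at h; linarith
    have hsq : x ^ 2 = |x| ^ (2 : ℝ) := by rw [Real.rpow_two, sq_abs]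
    calc x ^ 2 * 1 = |x| ^ p * (|x| ^ (2 : ℝ)) ^ ((2 - p) / 2) := by
          rw [mul_one, ← Real.rpow_mul hx.le, ← Real.rpow_add hx, hsq]
          ring_nf
      _ ≤ |x| ^ p * s ^ ((2 - p) / 2) := by
          refine mul_le_mul_of_nonneg_left ?_ (by positivity)
          exact Real.rpow_le_rpow_of_nonpos hs (hsq ▸ h.le) (by linarith)
  · rw [mul_zero]
    positivity

section

variable {Ω : Type*} [MeasureSpace Ω] {X : Ω → ℝ} {p : ℝ}

lemma Gfun_le_integral_mul_rpow (hXm : Measurable X) (hp : 2 ≤ p)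
    (hmom : Integrable (fun ω => |X ω| ^ p) ℙ) {s : ℝ} (hs : 0 < s) :
    Gfun X s ≤ (∫ ω, |X ω| ^ p) * s ^ (-(p / 2)) := by
  have hbound := sq_mul_ite_le_abs_rpow_mul_rpow hp hs
  have hmeas : Measurable fun ω => X ω ^ 2 * (if s < X ω ^ 2 then 1 else 0) :=
    (hXm.pow_const 2).mul
      (Measurable.ite (measurableSet_lt measurable_const (hXm.pow_const 2))
        measurable_const measurable_const)
  have hint : Integrable (fun ω => X ω ^ 2 * (if s < X ω ^ 2 then 1 else 0)) ℙ :=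
    (hmom.mul_const _).mono' hmeas.aestronglyMeasurable <| ae_of_all _ fun ω => by
      rw [Real.norm_eq_abs, abs_of_nonneg (by positivity)]
      exact hbound (X ω)
  calc Gfun X s ≤ s⁻¹ * ((∫ ω, |X ω| ^ p) * s ^ ((2 - p) / 2)) := by
        rw [← integral_mul_const]
        exact mul_le_mul_of_nonneg_left
          (integral_mono hint (hmom.mul_const _) fun ω => hbound (X ω)) (by positivity)
    _ = (∫ ω, |X ω| ^ p) * s ^ (-(p / 2)) := by
        rw [mul_left_comm, ← Real.rpow_neg_one, ← Real.rpow_add hs]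
        ring_nf

lemma GfunInv_nonneg (v : ℝ) : 0 ≤ GfunInv X v :=
  Real.sInf_nonneg fun _ hs => hs.1.le

lemma GfunInv_le_of_Gfun_le {s v : ℝ} (hs : 0 < s) (hG : Gfun X s ≤ v) : GfunInv X v ≤ s :=
  csInf_le ⟨0, fun _ hr => hr.1.le⟩ ⟨hs, hG⟩

lemma GfunInv_mul_le_rpow (hXm : Measurable X) (hp : 2 ≤ p)
    (hmom : Integrable (fun ω => |X ω| ^ p) ℙ) {v : ℝ} (hv : 0 < v) :
    GfunInv X v * v ≤ ((∫ ω, |X ω| ^ p) + 1) ^ (2 / p) * v ^ ((p - 2) / p) := by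
  set C := ∫ ω, |X ω| ^ p
  have hC : 0 ≤ C := integral_nonneg fun ω => by positivity
  set s := ((C + 1) / v) ^ (2 / p) with hs_def
  have hs : 0 < s := by positivity
  have hGs : Gfun X s ≤ v :=
    calc Gfun X s ≤ C * s ^ (-(p / 2)) := Gfun_le_integral_mul_rpow hXm hp hmom hs
      _ = C / (C + 1) * v := by
          rw [← Real.rpow_mul (by positivity), show 2 / p * -(p / 2) = -1 by field_simp,
            Real.rpow_neg_one, inv_div]
          ring
      _ ≤ 1 * v := by gcongr; exact (div_le_one (by positivity)).mpr (by linarith)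
      _ = v := one_mul v
  calc GfunInv X v * v ≤ s * v := by gcongr; exact GfunInv_le_of_Gfun_le hs hGs
    _ = (C + 1) ^ (2 / p) * v ^ ((p - 2) / p) := by
        rw [hs_def, Real.div_rpow (by positivity) hv.le, div_mul_eq_mul_div, mul_div_assoc,
          show (p - 2) / p = 1 - 2 / p by field_simp, Real.rpow_sub hv, Real.rpow_one]

end

theorem stmt7_general {Ω : Type*} [MeasureSpace Ω]
    (X : Ω → ℝ) (hXm : Measurable X) (p : ℝ) (hp : 2 < p)
    (hmom : Integrable (fun ω => |X ω| ^ p) ℙ)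
    (t : ℕ → ℝ) (ht : ∀ k, 0 < t k)
    (hsum : Summable (fun k : ℕ => t (k + 1) ^ ((p - 2) / p))) :
    Summable (fun k : ℕ => GfunInv X (t (k + 1)) * t (k + 1)) :=
  (hsum.mul_left _).of_nonneg_of_le
    (fun _ => mul_nonneg (GfunInv_nonneg _) (ht _).le)
    (fun k => GfunInv_mul_le_rpow hXm hp.le hmom (ht (k + 1)))

/-- If `E|X|^p < ∞` for some `p > 2` and `(t_k)_{k≥1}` are positive reals with
`Σ_{k≥1} t_k^{(p−2)/p} < ∞`, then `Σ_{k≥1} G⁻¹(t_k) · t_k < ∞`. -/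
theorem stmt7 {Ω : Type*} [MeasureSpace Ω] [IsProbabilityMeasure (ℙ : Measure Ω)]
    (X : Ω → ℝ) (hXm : Measurable X) (p : ℝ) (hp : 2 < p)
    (hmom : Integrable (fun ω => |X ω| ^ p) ℙ)
    (t : ℕ → ℝ) (ht : ∀ k, 0 < t k)
    (hsum : Summable (fun k : ℕ => t (k + 1) ^ ((p - 2) / p))) :
    Summable (fun k : ℕ => GfunInv X (t (k + 1)) * t (k + 1)) :=
  stmt7_general X hXm p hp hmom t ht hsum
end

section
/- Let σ > 0, N(x) = exp(−x²/(4σ²)), and p_j(x) = x^j for j = 0,1,2. For the Laplace error density with variance σ², whose Fourier transform is f_ε*(t) = 1/(1 + σ²t²/2), define I_j(z) = (1/2π) Re ∫ (p_j N)*(t) e^{−itz} (1 + σ²t²/2) dt. Then for all z ∈ ℝ: I₀(z) = [5/4 − z²/(8σ²)] e^{−z²/(4σ²)}, I₁(z) = [7z/4 − z³/(8σ²)] e^{−z²/(4σ²)}, and I₂(z) = [−σ² + 9z²/4 − z⁴/(8σ²)] e^{−z²/(4σ²)}. -/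
open MeasureTheory Set

/-- The deconvolution integrals `I_j` for the Gaussian weight `N(x) = exp(−x²/(4σ²))`,
monomials `p_j(x) = x^j` and Laplace error with Fourier transform `1/(1 + σ²t²/2)`:
`I_j(z) = (1/2π) Re ∫ (p_j N)*(t) e^{−itz} (1 + σ²t²/2) dt`. -/
noncomputable def ILap (σ : ℝ) (j : ℕ) (z : ℝ) : ℝ :=
  (1 / (2 * Real.pi)) *
    (∫ t : ℝ, ftR (fun x => x ^ j * Real.exp (-(x ^ 2) / (4 * σ ^ 2))) t *
      Complex.exp (-(Complex.I * (t : ℂ) * (z : ℂ))) *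
      ((1 + σ ^ 2 * t ^ 2 / 2 : ℝ) : ℂ)).re

/-!
Both Fourier integrals are moments `M_k = ∫ x ^ k * exp (-b x² + i r x) dx` of a modulated
Gaussian: the transform of `x ^ j * exp (-x²/(4σ²))` is `M_j` with `b = 1/(4σ²)`, `r = t`, and after
multiplying by `1 + σ²t²/2` the outer integral is a combination of `M_0, …, M_4` with `b = σ²`,
`r = -z`. Integration by parts gives `2b M_{k+1} = k M_{k-1} + i r M_k`, so each moment is a
polynomial in `r` times `M_0 = √(π/b) exp (-r²/(4b))`, and the three formulas reduce to algebra.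
-/

open Complex Real

noncomputable def modGaussian (b r x : ℝ) : ℂ := cexp (-b * x ^ 2 + I * r * x)

noncomputable def gaussianMoment (b r : ℝ) (k : ℕ) : ℂ := ∫ x : ℝ, (x : ℂ) ^ k * modGaussian b r x

section GaussianMoment

variable {b : ℝ}

lemma norm_pow_mul_modGaussian (b r : ℝ) (k : ℕ) (x : ℝ) :
    ‖(x : ℂ) ^ k * modGaussian b r x‖ = ‖x ^ k * Real.exp (-b * x ^ 2)‖ := by
  rw [norm_mul, norm_pow, norm_real, modGaussian, norm_exp, norm_mul, norm_pow,
    Real.norm_of_nonneg (Real.exp_nonneg _)]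
  simp [pow_two]

lemma integrable_pow_mul_modGaussian (hb : 0 < b) (r : ℝ) (k : ℕ) :
    Integrable fun x : ℝ => (x : ℂ) ^ k * modGaussian b r x := by
  have hdom := integrable_rpow_mul_exp_neg_mul_sq hb (s := k)
    (by linarith [k.cast_nonneg (α := ℝ)])
  simp_rw [Real.rpow_natCast] at hdom
  exact hdom.norm.mono' (by unfold modGaussian; fun_prop)
    (.of_forall fun x => (norm_pow_mul_modGaussian b r k x).le)

lemma hasDerivAt_pow_mul_modGaussian (b r : ℝ) (k : ℕ) (x : ℝ) :
    HasDerivAt (fun y : ℝ => (y : ℂ) ^ k * modGaussian b r y)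
      (k * (x ^ (k - 1) * modGaussian b r x) + I * r * (x ^ k * modGaussian b r x)
        - 2 * b * (x ^ (k + 1) * modGaussian b r x)) x := by
  have hexp : HasDerivAt (fun y : ℂ => -b * y ^ 2 + I * r * y) (-b * (2 * x) + I * r) x :=
    (((hasDerivAt_pow 2 (x : ℂ)).const_mul (-b : ℂ)).add
      ((hasDerivAt_id (x : ℂ)).const_mul (I * r))).congr_deriv (by simp)
  refine ((hasDerivAt_pow k (x : ℂ)).mul hexp.cexp).comp_ofReal.congr_deriv ?_
  simp only [modGaussian]
  ring

/-- At `k = 0` the truncated `k - 1` is harmless: that term carries the factor `k`. -/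
lemma gaussianMoment_succ (hb : 0 < b) (r : ℝ) (k : ℕ) :
    2 * b * gaussianMoment b r (k + 1) =
      k * gaussianMoment b r (k - 1) + I * r * gaussianMoment b r k := by
  have hf := integrable_pow_mul_modGaussian hb r
  have hA := (hf (k - 1)).const_mul (k : ℂ)
  have hB := (hf k).const_mul (I * r)
  have hC := (hf (k + 1)).const_mul (2 * b : ℂ)
  have hAB : Integrable fun x : ℝ => k * ((x : ℂ) ^ (k - 1) * modGaussian b r x) +
      I * r * ((x : ℂ) ^ k * modGaussian b r x) := hA.add hB
  have h := integral_eq_zero_of_hasDerivAt_of_integrable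
    (hasDerivAt_pow_mul_modGaussian b r k) (hAB.sub hC) (hf k)
  rw [integral_sub hAB hC, integral_add hA hB, integral_const_mul,
    integral_const_mul, integral_const_mul] at h
  simp only [gaussianMoment]
  linear_combination -h

lemma gaussianMoment_zero (hb : 0 < b) (r : ℝ) :
    gaussianMoment b r 0 = ((√π / √b * Real.exp (-r ^ 2 / (4 * b)) : ℝ) : ℂ) := by
  have h := integral_cexp_quadratic (b := -b) (by simpa using hb) (I * r) 0
  simp only [gaussianMoment, modGaussian, pow_zero, one_mul]
  simp only [add_zero, neg_neg, zero_sub] at h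
  rw [h, ← Real.sqrt_div' _ hb.le, Real.sqrt_eq_rpow, ofReal_mul, ofReal_cpow (by positivity),
    ofReal_exp]
  push_cast
  congr 2
  rw [mul_pow, I_sq]
  ring

lemma gaussianMoment_succ_eq_div (hb : 0 < b) (r : ℝ) (k : ℕ) :
    gaussianMoment b r (k + 1) =
      (k * gaussianMoment b r (k - 1) + I * r * gaussianMoment b r k) / (2 * b) := by
  have : (b : ℂ) ≠ 0 := by exact_mod_cast hb.ne'
  rw [← gaussianMoment_succ hb]
  field_simp

lemma gaussianMoment_one (hb : 0 < b) (r : ℝ) :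
    gaussianMoment b r 1 = I * r / (2 * b) * gaussianMoment b r 0 := by
  rw [gaussianMoment_succ_eq_div hb r 0]
  push_cast
  ring

lemma gaussianMoment_two (hb : 0 < b) (r : ℝ) :
    gaussianMoment b r 2 = (2 * b - r ^ 2) / (4 * b ^ 2) * gaussianMoment b r 0 := by
  have : (b : ℂ) ≠ 0 := by exact_mod_cast hb.ne'
  rw [gaussianMoment_succ_eq_div hb r 1, gaussianMoment_one hb]
  push_cast
  field_simp
  ring_nf
  rw [I_sq]
  ring

lemma gaussianMoment_three (hb : 0 < b) (r : ℝ) :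
    gaussianMoment b r 3 = I * r * (6 * b - r ^ 2) / (8 * b ^ 3) * gaussianMoment b r 0 := by
  have : (b : ℂ) ≠ 0 := by exact_mod_cast hb.ne'
  rw [gaussianMoment_succ_eq_div hb r 2, gaussianMoment_two hb, gaussianMoment_one hb]
  push_cast
  field_simp
  ring

lemma gaussianMoment_four (hb : 0 < b) (r : ℝ) :
    gaussianMoment b r 4 =
      (12 * b ^ 2 - 12 * b * r ^ 2 + r ^ 4) / (16 * b ^ 4) * gaussianMoment b r 0 := by
  have : (b : ℂ) ≠ 0 := by exact_mod_cast hb.ne'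
  rw [gaussianMoment_succ_eq_div hb r 3, gaussianMoment_three hb, gaussianMoment_two hb]
  push_cast
  field_simp
  ring_nf
  rw [I_sq]
  ring

lemma integral_sum_mul_modGaussian (hb : 0 < b) (r : ℝ) {n : ℕ} (a : Fin n → ℂ) :
    ∫ x : ℝ, (∑ k, a k * (x : ℂ) ^ (k : ℕ)) * modGaussian b r x =
      ∑ k, a k * gaussianMoment b r k := by
  simp_rw [Finset.sum_mul, mul_assoc]
  rw [integral_finsetSum _ fun (k : Fin n) _ =>
    (integrable_pow_mul_modGaussian hb r k).const_mul (a k)]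
  simp_rw [integral_const_mul, gaussianMoment]

end GaussianMoment

section Laplace

variable {σ : ℝ}

lemma ftR_pow_mul_gaussian (σ t : ℝ) (j : ℕ) :
    ftR (fun x => x ^ j * Real.exp (-(x ^ 2) / (4 * σ ^ 2))) t =
      gaussianMoment (1 / (4 * σ ^ 2)) t j := by
  unfold ftR gaussianMoment modGaussian
  congr 1 with x
  push_cast
  rw [mul_comm, mul_assoc, ← Complex.exp_add]
  ring_nf

lemma gaussianMoment_zero_mul_cexp (hσ : 0 < σ) (t z : ℝ) :
    gaussianMoment (1 / (4 * σ ^ 2)) t 0 * cexp (-(I * t * z)) =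
      (2 * σ * √π : ℝ) * modGaussian (σ ^ 2) (-z) t := by
  rw [gaussianMoment_zero (by positivity), modGaussian, one_div, Real.sqrt_inv,
    show 4 * σ ^ 2 = (2 * σ) ^ 2 by ring, Real.sqrt_sq (by positivity)]
  push_cast
  rw [mul_assoc, ← Complex.exp_add]
  congr 2
  · rw [div_inv_eq_mul]
    ring
  · have : (σ : ℂ) ≠ 0 := by exact_mod_cast hσ.ne'
    field_simp
    ring

lemma integral_ftR_mul_laplace (hσ : 0 < σ) (z : ℝ) {j : ℕ} {a₀ a₁ a₂ : ℂ}
    (hj : ∀ t : ℝ, gaussianMoment (1 / (4 * σ ^ 2)) t j =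
      (a₀ + a₁ * t + a₂ * t ^ 2) * gaussianMoment (1 / (4 * σ ^ 2)) t 0) :
    ∫ t : ℝ, ftR (fun x => x ^ j * Real.exp (-(x ^ 2) / (4 * σ ^ 2))) t *
        cexp (-(I * t * z)) * ((1 + σ ^ 2 * t ^ 2 / 2 : ℝ) : ℂ) =
      (2 * σ * √π : ℝ) * ∑ k : Fin 5,
        ![a₀, a₁, a₂ + σ ^ 2 / 2 * a₀, σ ^ 2 / 2 * a₁, σ ^ 2 / 2 * a₂] k *
          gaussianMoment (σ ^ 2) (-z) k := by
  rw [← integral_sum_mul_modGaussian (by positivity), ← integral_const_mul]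
  congr 1 with t
  have h0 := gaussianMoment_zero_mul_cexp hσ t z
  rw [ftR_pow_mul_gaussian, hj]
  simp only [Fin.sum_univ_five, Fin.isValue, Matrix.cons_val_zero, Matrix.cons_val_one,
    Matrix.cons_val, Fin.coe_ofNat_eq_mod, Nat.reduceMod]
  push_cast at h0 ⊢
  linear_combination ((a₀ + a₁ * t + a₂ * t ^ 2) * (1 + σ ^ 2 * t ^ 2 / 2)) * h0

/-- The fractions in `hc` are the ratios
`gaussianMoment (σ ^ 2) (-z) k / gaussianMoment (σ ^ 2) (-z) 0` for `k = 1, …, 4`. -/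
lemma ILap_eq_of_gaussianMoment_eq (hσ : 0 < σ) (z : ℝ) {j : ℕ} {a₀ a₁ a₂ : ℂ}
    (hj : ∀ t : ℝ, gaussianMoment (1 / (4 * σ ^ 2)) t j =
      (a₀ + a₁ * t + a₂ * t ^ 2) * gaussianMoment (1 / (4 * σ ^ 2)) t 0)
    {c : ℝ} (hc : a₀ + a₁ * (-I * z / (2 * σ ^ 2)) +
      (a₂ + σ ^ 2 / 2 * a₀) * ((2 * σ ^ 2 - z ^ 2) / (4 * σ ^ 4)) +
      σ ^ 2 / 2 * a₁ * (-I * z * (6 * σ ^ 2 - z ^ 2) / (8 * σ ^ 6)) +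
      σ ^ 2 / 2 * a₂ * ((12 * σ ^ 4 - 12 * σ ^ 2 * z ^ 2 + z ^ 4) / (16 * σ ^ 8)) = c) :
    ILap σ j z = c * Real.exp (-(z ^ 2) / (4 * σ ^ 2)) := by
  have hσ2 : 0 < σ ^ 2 := by positivity
  have hσ0 : (σ : ℂ) ≠ 0 := by exact_mod_cast hσ.ne'
  have hπ : ((√π : ℝ) : ℂ) ^ 2 = π := by exact_mod_cast Real.sq_sqrt pi_pos.le
  have hM0 : gaussianMoment (σ ^ 2) (-z) 0 =
      ((√π / σ * Real.exp (-(z ^ 2) / (4 * σ ^ 2)) : ℝ) : ℂ) := by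
    rw [gaussianMoment_zero hσ2, Real.sqrt_sq hσ.le, neg_sq]
  suffices h : (2 * σ * √π : ℝ) * ∑ k : Fin 5,
      ![a₀, a₁, a₂ + σ ^ 2 / 2 * a₀, σ ^ 2 / 2 * a₁, σ ^ 2 / 2 * a₂] k *
        gaussianMoment (σ ^ 2) (-z) k =
      ((2 * π * (c * Real.exp (-(z ^ 2) / (4 * σ ^ 2))) : ℝ) : ℂ) by
    rw [ILap, integral_ftR_mul_laplace hσ z hj, h, ofReal_re]
    field_simp
  simp only [Fin.sum_univ_five, Fin.isValue, Matrix.cons_val_zero, Matrix.cons_val_one,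
    Matrix.cons_val, Fin.coe_ofNat_eq_mod, Nat.reduceMod]
  rw [gaussianMoment_one hσ2, gaussianMoment_two hσ2, gaussianMoment_three hσ2,
    gaussianMoment_four hσ2, hM0]
  push_cast
  rw [← hc, ← hπ]
  field_simp

end Laplace

/-- Explicit formulas for `I₀, I₁, I₂` for the Laplace error density. -/
theorem stmt12 (σ : ℝ) (hσ : 0 < σ) :
    (∀ z : ℝ, ILap σ 0 z = (5 / 4 - z ^ 2 / (8 * σ ^ 2)) * Real.exp (-(z ^ 2) / (4 * σ ^ 2))) ∧
    (∀ z : ℝ, ILap σ 1 z =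
      (7 * z / 4 - z ^ 3 / (8 * σ ^ 2)) * Real.exp (-(z ^ 2) / (4 * σ ^ 2))) ∧
    (∀ z : ℝ, ILap σ 2 z =
      (-σ ^ 2 + 9 * z ^ 2 / 4 - z ^ 4 / (8 * σ ^ 2)) * Real.exp (-(z ^ 2) / (4 * σ ^ 2))) := by
  have hb : 0 < 1 / (4 * σ ^ 2) := by positivity
  have hσ0 : (σ : ℂ) ≠ 0 := by exact_mod_cast hσ.ne'
  refine ⟨fun z => ?_, fun z => ?_, fun z => ?_⟩
  · refine ILap_eq_of_gaussianMoment_eq hσ z (a₀ := 1) (a₁ := 0) (a₂ := 0) (by simp) ?_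
    push_cast
    field_simp
    ring
  · refine ILap_eq_of_gaussianMoment_eq hσ z (a₀ := 0) (a₁ := 2 * σ ^ 2 * I) (a₂ := 0)
      (fun t => by rw [gaussianMoment_one hb]; push_cast; field_simp; ring) ?_
    push_cast
    field_simp
    ring_nf
    rw [I_sq]
    ring
  · refine ILap_eq_of_gaussianMoment_eq hσ z (a₀ := 2 * σ ^ 2) (a₁ := 0) (a₂ := -4 * σ ^ 4)
      (fun t => by rw [gaussianMoment_two hb]; push_cast; field_simp; ring) ?_
    push_cast
    field_simp
    ring
end
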